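/- arXiv:0905.1034 — 5 statements merged into one kernel-verified Lean document; each statement's English description precedes it below -/
import Mathlib

section
/- If (M N) reduces in zero or more steps of μμ'-reduction to a term of the form μα.P, then either M reduces to some μα.M₁ with M₁[α =_r N] reducing to P, or N reduces to some μα.N₁ with N₁[α =_l M] reducing to P. -/
inductive Trm : Type
  | var : ℕ → Trm
  | lam : ℕ → Trm → Trm
  | app : Trm → Trm → Trm
  | mu  : ℕ → Trm → Trm
  | mvar : ℕ → Trm → Trm
  deriving DecidableEq

inductive Dir : Type
  | l | r
  deriving DecidableEq

/-- Capture-avoiding (naive named) β-substitution M[x := N]. -/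
def subst : Trm → ℕ → Trm → Trm
  | Trm.var y, x, N => if y = x then N else Trm.var y
  | Trm.lam y M, x, N => if y = x then Trm.lam y M else Trm.lam y (subst M x N)
  | Trm.app P Q, x, N => Trm.app (subst P x N) (subst Q x N)
  | Trm.mu a M, x, N => Trm.mu a (subst M x N)
  | Trm.mvar a M, x, N => Trm.mvar a (subst M x N)

/-- μ/μ'-substitution: M[α =_r N] replaces (α U) by (α (U N)); M[α =_l N] replaces (α U) by (α (N U)). -/
def msubst : Trm → ℕ → Dir → Trm → Trm
  | Trm.var y, _, _, _ => Trm.var y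
  | Trm.lam y M, a, s, N => Trm.lam y (msubst M a s N)
  | Trm.app P Q, a, s, N => Trm.app (msubst P a s N) (msubst Q a s N)
  | Trm.mu b M, a, s, N => if b = a then Trm.mu b M else Trm.mu b (msubst M a s N)
  | Trm.mvar b U, a, s, N =>
      let U' := msubst U a s N
      if b = a then
        match s with
        | Dir.r => Trm.mvar b (Trm.app U' N)
        | Dir.l => Trm.mvar b (Trm.app N U')
      else Trm.mvar b U'

abbrev MSub := List (ℕ × Dir × Trm)

def lookupD : MSub → ℕ → Option (Dir × Trm)
  | [], _ => none
  | (b, s, N) :: σ, a => if b = a then some (s, N) else lookupD σ a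

/-- Simultaneous μμ'-substitution. -/
def smsubst (σ : MSub) : Trm → Trm
  | Trm.var y => Trm.var y
  | Trm.lam y M => Trm.lam y (smsubst σ M)
  | Trm.app P Q => Trm.app (smsubst σ P) (smsubst σ Q)
  | Trm.mu b M => Trm.mu b (smsubst (σ.filter (fun p => p.1 != b)) M)
  | Trm.mvar b U =>
      let U' := smsubst σ U
      match lookupD σ b with
      | some (Dir.r, N) => Trm.mvar b (Trm.app U' N)
      | some (Dir.l, N) => Trm.mvar b (Trm.app N U')
      | none => Trm.mvar b U'

def lookupT : List (ℕ × Trm) → ℕ → Option Trm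
  | [], _ => none
  | (y, N) :: σ, x => if y = x then some N else lookupT σ x

/-- Simultaneous β-substitution. -/
def ssubst (σ : List (ℕ × Trm)) : Trm → Trm
  | Trm.var y =>
      match lookupT σ y with
      | some N => N
      | none => Trm.var y
  | Trm.lam y M => Trm.lam y (ssubst (σ.filter (fun p => p.1 != y)) M)
  | Trm.app P Q => Trm.app (ssubst σ P) (ssubst σ Q)
  | Trm.mu a M => Trm.mu a (ssubst σ M)
  | Trm.mvar a M => Trm.mvar a (ssubst σ M)

/-- One step of μμ'-reduction (no β), closed under all contexts. -/
inductive RedM : Trm → Trm → Prop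
  | mu : ∀ a M N, RedM (Trm.app (Trm.mu a M) N) (Trm.mu a (msubst M a Dir.r N))
  | mu' : ∀ a M N, RedM (Trm.app M (Trm.mu a N)) (Trm.mu a (msubst N a Dir.l M))
  | appL : ∀ M M' N, RedM M M' → RedM (Trm.app M N) (Trm.app M' N)
  | appR : ∀ M N N', RedM N N' → RedM (Trm.app M N) (Trm.app M N')
  | lam : ∀ x M M', RedM M M' → RedM (Trm.lam x M) (Trm.lam x M')
  | muC : ∀ a M M', RedM M M' → RedM (Trm.mu a M) (Trm.mu a M')
  | mvarC : ∀ a M M', RedM M M' → RedM (Trm.mvar a M) (Trm.mvar a M')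

/-- One step of βμμ'-reduction, closed under all contexts. -/
inductive Red : Trm → Trm → Prop
  | beta : ∀ x M N, Red (Trm.app (Trm.lam x M) N) (subst M x N)
  | mu : ∀ a M N, Red (Trm.app (Trm.mu a M) N) (Trm.mu a (msubst M a Dir.r N))
  | mu' : ∀ a M N, Red (Trm.app M (Trm.mu a N)) (Trm.mu a (msubst N a Dir.l M))
  | appL : ∀ M M' N, Red M M' → Red (Trm.app M N) (Trm.app M' N)
  | appR : ∀ M N N', Red N N' → Red (Trm.app M N) (Trm.app M N')
  | lam : ∀ x M M', Red M M' → Red (Trm.lam x M) (Trm.lam x M')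
  | muC : ∀ a M M', Red M M' → Red (Trm.mu a M) (Trm.mu a M')
  | mvarC : ∀ a M M', Red M M' → Red (Trm.mvar a M) (Trm.mvar a M')

/-- Strong normalization: no infinite R-reduction sequence from M. -/
def SNr (R : Trm → Trm → Prop) (M : Trm) : Prop := Acc (fun a b => R b a) M

/-- Subterm relation N ≤ M. -/
inductive Subterm : Trm → Trm → Prop
  | refl : ∀ M, Subterm M M
  | lam : ∀ x N M, Subterm N M → Subterm N (Trm.lam x M)
  | appL : ∀ N M P, Subterm N M → Subterm N (Trm.app M P)
  | appR : ∀ N M P, Subterm N P → Subterm N (Trm.app M P)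
  | mu : ∀ a N M, Subterm N M → Subterm N (Trm.mu a M)
  | mvar : ∀ a N M, Subterm N M → Subterm N (Trm.mvar a M)

/-- N ⪯ M : N is a subterm of some reduct of M. -/
def Pre (R : Trm → Trm → Prop) (N M : Trm) : Prop :=
  ∃ M', Relation.ReflTransGen R M M' ∧ Subterm N M'

/-- N ≺ M : N ≤ M' for some M' with M ▷* M' and (M ▷⁺ M' or N < M'). -/
def PreS (R : Trm → Trm → Prop) (N M : Trm) : Prop :=
  ∃ M', Relation.ReflTransGen R M M' ∧ Subterm N M' ∧
    (Relation.TransGen R M M' ∨ N ≠ M')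

/-- Number of symbols. -/
def cxty : Trm → ℕ
  | Trm.var _ => 1
  | Trm.lam _ M => cxty M + 1
  | Trm.app M N => cxty M + cxty N + 1
  | Trm.mu _ M => cxty M + 1
  | Trm.mvar _ M => cxty M + 1

/-- Length of the longest R-reduction starting from M. -/
noncomputable def eta (R : Trm → Trm → Prop) (M : Trm) : ℕ :=
  sSup {n | ∃ f : ℕ → Trm, f 0 = M ∧ ∀ i < n, R (f i) (f (i + 1))}

/-- Left-nested application (h M₁ … Mₙ). -/
def appList (h : Trm) (l : List Trm) : Trm := l.foldl Trm.app h

/-- The substitution M[α =_i (M₁ … Mₙ)] : replaces each (α U) by (α (x M₁ … M_{i-1} U M_{i+1} … Mₙ)),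
    i being a 0-based index into the list. -/
def isubst (a x : ℕ) (l : List Trm) (i : ℕ) : Trm → Trm
  | Trm.var y => Trm.var y
  | Trm.lam y M => Trm.lam y (isubst a x l i M)
  | Trm.app P Q => Trm.app (isubst a x l i P) (isubst a x l i Q)
  | Trm.mu b M => if b = a then Trm.mu b M else Trm.mu b (isubst a x l i M)
  | Trm.mvar b U =>
      let U' := isubst a x l i U
      if b = a then Trm.mvar b (appList (Trm.var x) (l.set i U')) else Trm.mvar b U'

/-- Free μ-variables. -/
def fmv : Trm → Finset ℕ
  | Trm.var _ => ∅
  | Trm.lam _ M => fmv M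
  | Trm.app P Q => fmv P ∪ fmv Q
  | Trm.mu b M => fmv M \ {b}
  | Trm.mvar b M => insert b (fmv M)

/-- Simple types. -/
inductive Ty : Type
  | bot : Ty
  | atom : ℕ → Ty
  | arr : Ty → Ty → Ty
  deriving DecidableEq

/-- Typing judgment Γ; Δ ⊢ M : A where Γ types λ-variables and Δ records, for each
    μ-variable α, the type A such that α : ¬A. -/
inductive Typing : (ℕ → Option Ty) → (ℕ → Option Ty) → Trm → Ty → Prop
  | var : ∀ Γ Δ x A, Γ x = some A → Typing Γ Δ (Trm.var x) A
  | lam : ∀ Γ Δ x M A B, Typing (Function.update Γ x (some A)) Δ M B →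
      Typing Γ Δ (Trm.lam x M) (Ty.arr A B)
  | app : ∀ Γ Δ M N A B, Typing Γ Δ M (Ty.arr A B) → Typing Γ Δ N A →
      Typing Γ Δ (Trm.app M N) B
  | mu : ∀ Γ Δ a M A, Typing Γ (Function.update Δ a (some A)) M Ty.bot →
      Typing Γ Δ (Trm.mu a M) A
  | mvar : ∀ Γ Δ a M A, Δ a = some A → Typing Γ Δ M A →
      Typing Γ Δ (Trm.mvar a M) Ty.bot

/-!
Only a root μ- or μ'-step can turn `(M N)` into a μ-abstraction, and from a μ-abstraction on the
reduction stays inside its body. Before that root step every step happens inside `M` or `N`: it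
either advances that side towards its μ-abstraction, or it rewrites the term that is later
substituted for α, which then becomes a reduction of `M₁[α =_r N]` resp. `N₁[α =_l M]`.
-/

open Relation

local notation:50 M " ▷* " N => ReflTransGen RedM M N

namespace RedM

theorem reflTransGen_mu_inv {b a : ℕ} {X P : Trm} (h : Trm.mu b X ▷* Trm.mu a P) :
    b = a ∧ X ▷* P := by
  generalize hT : Trm.mu b X = T at h
  induction h using ReflTransGen.head_induction_on generalizing b X with
  | refl => cases hT; exact ⟨rfl, .refl⟩
  | head hstep _ ih =>
    subst hT
    cases hstep with
    | muC _ _ X' hX =>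
      obtain ⟨rfl, hXP⟩ := ih rfl
      exact ⟨rfl, .head hX hXP⟩

theorem reflTransGen_lam (x : ℕ) {X Y : Trm} (h : X ▷* Y) : Trm.lam x X ▷* Trm.lam x Y :=
  ReflTransGen.lift (Trm.lam x) (fun _ _ => RedM.lam x _ _) _ _ h

theorem reflTransGen_mu (b : ℕ) {X Y : Trm} (h : X ▷* Y) : Trm.mu b X ▷* Trm.mu b Y :=
  ReflTransGen.lift (Trm.mu b) (fun _ _ => RedM.muC b _ _) _ _ h

theorem reflTransGen_mvar (b : ℕ) {X Y : Trm} (h : X ▷* Y) : Trm.mvar b X ▷* Trm.mvar b Y :=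
  ReflTransGen.lift (Trm.mvar b) (fun _ _ => RedM.mvarC b _ _) _ _ h

theorem reflTransGen_app {X X' Y Y' : Trm} (hX : X ▷* X') (hY : Y ▷* Y') :
    Trm.app X Y ▷* Trm.app X' Y' :=
  (ReflTransGen.lift (Trm.app · Y) (fun _ _ => RedM.appL _ _ _) _ _ hX).trans
    (ReflTransGen.lift (Trm.app X' ·) (fun _ _ => RedM.appR _ _ _) _ _ hY)

theorem msubst_reflTransGen {N N' : Trm} (h : RedM N N') :
    ∀ (U : Trm) (a : ℕ) (s : Dir), msubst U a s N ▷* msubst U a s N'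
  | Trm.var _, _, _ => .refl
  | Trm.lam y U, a, s => reflTransGen_lam y (msubst_reflTransGen h U a s)
  | Trm.app P Q, a, s =>
      reflTransGen_app (msubst_reflTransGen h P a s) (msubst_reflTransGen h Q a s)
  | Trm.mu b U, a, s => by
      by_cases hb : b = a
      · simp only [msubst, hb, if_true]; exact .refl
      · simp only [msubst, hb, if_false]
        exact reflTransGen_mu b (msubst_reflTransGen h U a s)
  | Trm.mvar b U, a, s => by
      have hU := msubst_reflTransGen h U a s
      by_cases hb : b = a
      · cases s
        · simpa [msubst, hb] using reflTransGen_mvar b (reflTransGen_app (.single h) hU)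
        · simpa [msubst, hb] using reflTransGen_mvar b (reflTransGen_app hU (.single h))
      · simpa [msubst, hb] using reflTransGen_mvar b hU

end RedM

theorem stmt0 (M N P : Trm) (a : ℕ)
    (h : Relation.ReflTransGen RedM (Trm.app M N) (Trm.mu a P)) :
    (∃ M₁, Relation.ReflTransGen RedM M (Trm.mu a M₁) ∧
        Relation.ReflTransGen RedM (msubst M₁ a Dir.r N) P) ∨
    (∃ N₁, Relation.ReflTransGen RedM N (Trm.mu a N₁) ∧
        Relation.ReflTransGen RedM (msubst N₁ a Dir.l M) P) := by
  generalize hT : Trm.app M N = T at h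
  induction h using ReflTransGen.head_induction_on generalizing M N with
  | refl => cases hT
  | head hstep hrest ih =>
    subst hT
    cases hstep with
    | mu _ M₁ _ =>
      obtain ⟨rfl, hP⟩ := RedM.reflTransGen_mu_inv hrest
      exact .inl ⟨M₁, .refl, hP⟩
    | mu' _ _ N₁ =>
      obtain ⟨rfl, hP⟩ := RedM.reflTransGen_mu_inv hrest
      exact .inr ⟨N₁, .refl, hP⟩
    | appL _ M' _ hM =>
      rcases ih M' N rfl with ⟨M₁, hM₁, hP⟩ | ⟨N₁, hN₁, hP⟩
      · exact .inl ⟨M₁, .head hM hM₁, hP⟩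
      · exact .inr ⟨N₁, hN₁, (RedM.msubst_reflTransGen hM N₁ a .l).trans hP⟩
    | appR _ _ N' hN =>
      rcases ih M N' rfl with ⟨M₁, hM₁, hP⟩ | ⟨N₁, hN₁, hP⟩
      · exact .inl ⟨M₁, hM₁, (RedM.msubst_reflTransGen hN M₁ a .r).trans hP⟩
      · exact .inr ⟨N₁, .head hN hN₁, hP⟩
end

section
/- If M and N are strongly normalizing for μμ'-reduction but (M N) is not, then either M reduces to some μα.M₁ with M₁[α =_r N] not strongly normalizing, or N reduces to some μβ.N₁ with N₁[β =_l M] not strongly normalizing. -/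
/-! A reduction of `(M N)` either is a head μ- or μ'-step, landing in `μα.M₁[α =_r N]` or
`μβ.N₁[β =_l M]`, or reduces inside `M` or `N`. By well-founded induction on `M` and `N`, an
infinite reduction of `(M N)` must eventually take a head step from reducts of `M` and `N`.
Reducing `N` to `N'` only reduces `M₁[α =_r N]` to `M₁[α =_r N']` (and symmetrically), so if every
`M₁[α =_r N]` and `N₁[β =_l M]` is strongly normalizing, so are the ones met along the way. -/

open Relation

theorem SNr.of_reflTransGen {R : Trm → Trm → Prop} {M M' : Trm} (hM : SNr R M)
    (hMM' : ReflTransGen R M M') : SNr R M' := by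
  induction hMM' with
  | refl => exact hM
  | tail _ step ih => exact ih.inv step

theorem SNr.mu {M : Trm} (hM : SNr RedM M) (a : ℕ) : SNr RedM (Trm.mu a M) := by
  induction hM with
  | intro M _ ih =>
    constructor
    rintro _ (_ | _ | _ | _ | _ | ⟨_, _, M', hM'⟩)
    exact ih M' hM'

namespace RedM

theorem star_app {M M' N N' : Trm} (hM : ReflTransGen RedM M M') (hN : ReflTransGen RedM N N') :
    ReflTransGen RedM (Trm.app M N) (Trm.app M' N') :=
  (hM.lift (Trm.app · N) fun _ _ => appL _ _ N).trans (hN.lift (Trm.app M') fun _ _ => appR M' _ _)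

theorem star_lam (x : ℕ) {M M' : Trm} (h : ReflTransGen RedM M M') :
    ReflTransGen RedM (Trm.lam x M) (Trm.lam x M') :=
  h.lift (Trm.lam x) fun _ _ => lam x _ _

theorem star_mu (a : ℕ) {M M' : Trm} (h : ReflTransGen RedM M M') :
    ReflTransGen RedM (Trm.mu a M) (Trm.mu a M') :=
  h.lift (Trm.mu a) fun _ _ => muC a _ _

theorem star_mvar (a : ℕ) {M M' : Trm} (h : ReflTransGen RedM M M') :
    ReflTransGen RedM (Trm.mvar a M) (Trm.mvar a M') :=
  h.lift (Trm.mvar a) fun _ _ => mvarC a _ _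

theorem msubst_right {N N' : Trm} (h : RedM N N') (P : Trm) (a : ℕ) (s : Dir) :
    ReflTransGen RedM (msubst P a s N) (msubst P a s N') := by
  induction P with
  | var y => exact .refl
  | lam y P ih => exact star_lam y ih
  | app P Q ihP ihQ => exact star_app ihP ihQ
  | mu b P ih =>
    by_cases hb : b = a
    · simp only [msubst, hb, if_true]; exact .refl
    · simp only [msubst, hb, if_false]; exact star_mu b ih
  | mvar b U ih =>
    by_cases hb : b = a
    · cases s
      · simpa only [msubst, hb, if_true] using star_mvar b (star_app (.single h) ih)
      · simpa only [msubst, hb, if_true] using star_mvar b (star_app ih (.single h))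
    · simpa only [msubst, hb, if_false] using star_mvar b ih

end RedM

theorem SNr.app {M N : Trm} (hM : SNr RedM M) (hN : SNr RedM N)
    (hμ : ∀ a M₁, ReflTransGen RedM M (Trm.mu a M₁) → SNr RedM (msubst M₁ a Dir.r N))
    (hμ' : ∀ b N₁, ReflTransGen RedM N (Trm.mu b N₁) → SNr RedM (msubst N₁ b Dir.l M)) :
    SNr RedM (Trm.app M N) := by
  induction hM generalizing N with
  | intro M _ ihM =>
    induction hN with
    | intro N hNacc ihN =>
      constructor
      rintro _ (⟨a, M₁⟩ | ⟨b, _, N₁⟩ | ⟨_, M', _, hMM'⟩ | ⟨_, _, N', hNN'⟩)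
      · exact (hμ a M₁ .refl).mu a
      · exact (hμ' b N₁ .refl).mu b
      · exact ihM M' hMM' ⟨N, hNacc⟩ (fun a M₁ hr => hμ a M₁ (.head hMM' hr))
          (fun b N₁ hr => (hμ' b N₁ hr).of_reflTransGen (RedM.msubst_right hMM' N₁ b .l))
      · exact ihN N' hNN'
          (fun a M₁ hr => (hμ a M₁ hr).of_reflTransGen (RedM.msubst_right hNN' M₁ a .r))
          (fun b N₁ hr => hμ' b N₁ (.head hNN' hr))

theorem stmt2 (M N : Trm) (hM : SNr RedM M) (hN : SNr RedM N)
    (h : ¬ SNr RedM (Trm.app M N)) :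
    (∃ a M₁, Relation.ReflTransGen RedM M (Trm.mu a M₁) ∧
        ¬ SNr RedM (msubst M₁ a Dir.r N)) ∨
    (∃ b N₁, Relation.ReflTransGen RedM N (Trm.mu b N₁) ∧
        ¬ SNr RedM (msubst N₁ b Dir.l M)) := by
  contrapose! h
  exact hM.app hN h.1 h.2
end

section
/- If (M N) reduces by βμμ'-reduction in zero or more steps to a term of the form λx.P, then M reduces to some λy.M₁ and M₁[y := N] reduces to λx.P. -/
/-!
Until its first head step, a reduction of `(M N)` reduces `M` and `N` separately. That head step
cannot be a μ- or μ'-step, since a μ-abstraction only ever reduces to μ-abstractions, so it is a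
β-step `(λy.M₁ N') ▷ M₁[y := N']` with `M ▷* λy.M₁` and `N ▷* N'`; and
`M₁[y := N] ▷* M₁[y := N']` because substitution is monotone in the substituted term.
-/

open Relation

theorem reflTransGen_red_lam {x : ℕ} {M M' : Trm} (h : ReflTransGen Red M M') :
    ReflTransGen Red (Trm.lam x M) (Trm.lam x M') :=
  ReflTransGen.lift (Trm.lam x) (fun _ _ => Red.lam x _ _) _ _ h

theorem reflTransGen_red_mu {a : ℕ} {M M' : Trm} (h : ReflTransGen Red M M') :
    ReflTransGen Red (Trm.mu a M) (Trm.mu a M') :=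
  ReflTransGen.lift (Trm.mu a) (fun _ _ => Red.muC a _ _) _ _ h

theorem reflTransGen_red_mvar {a : ℕ} {M M' : Trm} (h : ReflTransGen Red M M') :
    ReflTransGen Red (Trm.mvar a M) (Trm.mvar a M') :=
  ReflTransGen.lift (Trm.mvar a) (fun _ _ => Red.mvarC a _ _) _ _ h

theorem reflTransGen_red_app {M M' N N' : Trm} (hM : ReflTransGen Red M M')
    (hN : ReflTransGen Red N N') : ReflTransGen Red (Trm.app M N) (Trm.app M' N') :=
  (ReflTransGen.lift (Trm.app · N) (fun _ _ => Red.appL _ _ N) _ _ hM).trans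
    (ReflTransGen.lift (Trm.app M') (fun _ _ => Red.appR M' _ _) _ _ hN)

theorem reflTransGen_red_subst (M : Trm) (x : ℕ) {N N' : Trm} (h : ReflTransGen Red N N') :
    ReflTransGen Red (subst M x N) (subst M x N') := by
  induction M with
  | var y =>
    unfold subst
    split_ifs
    · exact h
    · exact .refl
  | lam y M ih =>
    unfold subst
    split_ifs
    · exact .refl
    · exact reflTransGen_red_lam ih
  | app P Q ihP ihQ => exact reflTransGen_red_app ihP ihQ
  | mu a M ih => exact reflTransGen_red_mu ih
  | mvar a M ih => exact reflTransGen_red_mvar ih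

theorem exists_eq_mu_of_reflTransGen_red {a : ℕ} {M L : Trm}
    (h : ReflTransGen Red (Trm.mu a M) L) : ∃ M', L = Trm.mu a M' := by
  induction h with
  | refl => exact ⟨M, rfl⟩
  | tail _ step ih =>
    obtain ⟨M', rfl⟩ := ih
    cases step with
    | muC _ _ M'' _ => exact ⟨M'', rfl⟩

theorem stmt6 (M N P : Trm) (x : ℕ)
    (h : Relation.ReflTransGen Red (Trm.app M N) (Trm.lam x P)) :
    ∃ y M₁, Relation.ReflTransGen Red M (Trm.lam y M₁) ∧
      Relation.ReflTransGen Red (subst M₁ y N) (Trm.lam x P) := by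
  generalize hT : Trm.app M N = T at h
  induction h using ReflTransGen.head_induction_on generalizing M N with
  | refl => cases hT
  | head step rest ih =>
    subst hT
    have not_mu (a : ℕ) (L : Trm) : ¬ ReflTransGen Red (Trm.mu a L) (Trm.lam x P) := fun h' => by
      obtain ⟨_, h⟩ := exists_eq_mu_of_reflTransGen_red h'
      cases h
    cases step with
    | beta y M₁ => exact ⟨y, M₁, .refl, rest⟩
    | mu a L => exact absurd rest (not_mu _ _)
    | mu' a L => exact absurd rest (not_mu _ _)
    | appL _ M' _ s =>
      obtain ⟨y, M₁, hM, hsubst⟩ := ih M' N rfl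
      exact ⟨y, M₁, hM.head s, hsubst⟩
    | appR _ _ N' s =>
      obtain ⟨y, M₁, hM, hsubst⟩ := ih M N' rfl
      exact ⟨y, M₁, hM, (reflTransGen_red_subst M₁ y (.single s)).trans hsubst⟩
end

section
/- If (M N) reduces by βμμ'-reduction in zero or more steps to μα.P, then either M reduces to some λy.M₁ with M₁[y := N] reducing to μα.P, or M reduces to some μα.M₁ with M₁[α =_r N] reducing to P, or N reduces to some μα.N₁ with N₁[α =_l M] reducing to P. -/
/-!
Follow the reduction of `(M N)` from its first step. A head β-, μ- or μ'-step gives the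
corresponding alternative at once, because a μ-abstraction only reduces under its binder. A step
inside `M` or `N` is absorbed either into the reduction of `M` or `N`, or, since substitution is
monotone in the substituted term, into the reduction of the substituted body.
-/

open Relation

local infix:50 " ▷* " => ReflTransGen Red

section Congruence

variable {M M' N N' : Trm}

lemma redStar_app_left (h : M ▷* M') : Trm.app M N ▷* Trm.app M' N :=
  h.lift (Trm.app · N) fun _ _ => Red.appL _ _ _

lemma redStar_app_right (h : N ▷* N') : Trm.app M N ▷* Trm.app M N' :=
  h.lift (Trm.app M) fun _ _ => Red.appR _ _ _

lemma redStar_lam (x : ℕ) (h : M ▷* M') : Trm.lam x M ▷* Trm.lam x M' :=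
  h.lift (Trm.lam x) fun _ _ => Red.lam _ _ _

lemma redStar_mu (a : ℕ) (h : M ▷* M') : Trm.mu a M ▷* Trm.mu a M' :=
  h.lift (Trm.mu a) fun _ _ => Red.muC _ _ _

lemma redStar_mvar (a : ℕ) (h : M ▷* M') : Trm.mvar a M ▷* Trm.mvar a M' :=
  h.lift (Trm.mvar a) fun _ _ => Red.mvarC _ _ _

lemma redStar_app (hM : M ▷* M') (hN : N ▷* N') : Trm.app M N ▷* Trm.app M' N' :=
  (redStar_app_left hM).trans (redStar_app_right hN)

end Congruence

namespace Red

variable {N N' : Trm}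

lemma redStar_subst (h : Red N N') (X : Trm) (y : ℕ) : subst X y N ▷* subst X y N' := by
  induction X with
  | var z =>
      simp only [subst]
      split
      · exact .single h
      · exact .refl
  | lam z M ih =>
      simp only [subst]
      split
      · exact .refl
      · exact redStar_lam z ih
  | app P Q ihP ihQ => exact redStar_app ihP ihQ
  | mu b M ih => exact redStar_mu b ih
  | mvar b M ih => exact redStar_mvar b ih

lemma redStar_msubst (h : Red N N') (X : Trm) (a : ℕ) (s : Dir) :
    msubst X a s N ▷* msubst X a s N' := by
  induction X with
  | var z => exact .refl
  | lam z M ih => exact redStar_lam z ih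
  | app P Q ihP ihQ => exact redStar_app ihP ihQ
  | mu b M ih =>
      simp only [msubst]
      split
      · exact .refl
      · exact redStar_mu b ih
  | mvar b U ih =>
      simp only [msubst]
      split
      · cases s with
        | r => exact redStar_mvar b (redStar_app ih (.single h))
        | l => exact redStar_mvar b (redStar_app (.single h) ih)
      · exact redStar_mvar b ih

end Red

lemma redStar_mu_inv {a b : ℕ} {X Y : Trm} (h : Trm.mu a X ▷* Trm.mu b Y) : a = b ∧ X ▷* Y := by
  suffices ∀ T, Trm.mu a X ▷* T → ∃ X', T = Trm.mu a X' ∧ X ▷* X' by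
    obtain ⟨X', hT, hX⟩ := this _ h
    cases hT
    exact ⟨rfl, hX⟩
  intro T hT
  induction hT with
  | refl => exact ⟨X, rfl, .refl⟩
  | tail _ step ih =>
      obtain ⟨X', rfl, hX⟩ := ih
      cases step with
      | muC _ _ X'' hs => exact ⟨X'', rfl, hX.tail hs⟩

theorem stmt7 (M N P : Trm) (a : ℕ)
    (h : Relation.ReflTransGen Red (Trm.app M N) (Trm.mu a P)) :
    (∃ y M₁, Relation.ReflTransGen Red M (Trm.lam y M₁) ∧
        Relation.ReflTransGen Red (subst M₁ y N) (Trm.mu a P)) ∨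
    (∃ M₁, Relation.ReflTransGen Red M (Trm.mu a M₁) ∧
        Relation.ReflTransGen Red (msubst M₁ a Dir.r N) P) ∨
    (∃ N₁, Relation.ReflTransGen Red N (Trm.mu a N₁) ∧
        Relation.ReflTransGen Red (msubst N₁ a Dir.l M) P) := by
  generalize hQ : Trm.app M N = Q at h
  induction h using ReflTransGen.head_induction_on generalizing M N with
  | refl => cases hQ
  | head step rest ih =>
      subst hQ
      cases step with
      | beta y M₁ => exact .inl ⟨y, M₁, .refl, rest⟩
      | mu b M₁ =>
          obtain ⟨rfl, hP⟩ := redStar_mu_inv rest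
          exact .inr (.inl ⟨M₁, .refl, hP⟩)
      | mu' b _ N₁ =>
          obtain ⟨rfl, hP⟩ := redStar_mu_inv rest
          exact .inr (.inr ⟨N₁, .refl, hP⟩)
      | appL _ _ _ hM =>
          rcases ih _ _ rfl with ⟨y, M₁, h₁, h₂⟩ | ⟨M₁, h₁, h₂⟩ | ⟨N₁, h₁, h₂⟩
          · exact .inl ⟨y, M₁, .head hM h₁, h₂⟩
          · exact .inr (.inl ⟨M₁, .head hM h₁, h₂⟩)
          · exact .inr (.inr ⟨N₁, h₁, (hM.redStar_msubst N₁ a .l).trans h₂⟩)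
      | appR _ _ _ hN =>
          rcases ih _ _ rfl with ⟨y, M₁, h₁, h₂⟩ | ⟨M₁, h₁, h₂⟩ | ⟨N₁, h₁, h₂⟩
          · exact .inl ⟨y, M₁, h₁, (hN.redStar_subst M₁ y).trans h₂⟩
          · exact .inr (.inl ⟨M₁, h₁, (hN.redStar_msubst M₁ a .r).trans h₂⟩)
          · exact .inr (.inr ⟨N₁, .head hN h₁, h₂⟩)
end

section
/- A term of the form (x M₁ … Mₙ), i.e., a variable applied to arguments, never reduces by βμμ'-reduction to a term of the form λy.M. -/
/-! A term whose head is a variable or a μ-abstraction keeps that shape under reduction: a β-redex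
would need a λ in head position, and a μ- or μ'-step at the head yields a μ-abstraction. -/

inductive HasNeutralHead : Trm → Prop
  | var (x : ℕ) : HasNeutralHead (Trm.var x)
  | mu (a : ℕ) (M : Trm) : HasNeutralHead (Trm.mu a M)
  | app {M : Trm} (N : Trm) : HasNeutralHead M → HasNeutralHead (Trm.app M N)

namespace HasNeutralHead

theorem appList {h : Trm} (hh : HasNeutralHead h) (l : List Trm) :
    HasNeutralHead (appList h l) := by
  induction l generalizing h with
  | nil => exact hh
  | cons N l ih => exact ih (app N hh)

theorem red {M M' : Trm} (hM : HasNeutralHead M) (h : Red M M') : HasNeutralHead M' := by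
  induction h with
  | mu a _ _ | mu' a _ _ | muC a _ _ _ => exact mu a _
  | appL _ _ N _ ih => cases hM with | app _ hM => exact app N (ih hM)
  | appR _ N _ _ => cases hM with | app _ hM => exact app _ hM
  | beta => cases hM with | app _ hM => cases hM
  | lam | mvarC => cases hM

theorem reflTransGen_red {M M' : Trm} (hM : HasNeutralHead M)
    (h : Relation.ReflTransGen Red M M') : HasNeutralHead M' := by
  induction h with
  | refl => exact hM
  | tail _ step ih => exact ih.red step

theorem not_lam (y : ℕ) (M : Trm) : ¬ HasNeutralHead (Trm.lam y M) := nofun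

end HasNeutralHead

theorem stmt13 (x : ℕ) (l : List Trm) (y : ℕ) (M : Trm) :
    ¬ Relation.ReflTransGen Red (appList (Trm.var x) l) (Trm.lam y M) := fun h =>
  HasNeutralHead.not_lam y M (((HasNeutralHead.var x).appList l).reflTransGen_red h)
end
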